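/- Let Ω₁ ⊂ ℍ_s^n be slice-open and real-path-connected, let Ω₂ ⊂ ℍ_s^n be slice-open and Ω₁-stem-preserving, and let f : Ω₂ → ℍ be weakly slice regular. Then for every γ ∈ 𝒫(ℂ^n, Ω₁) and every I ∈ 𝕊(Ω₁, γ), f^c_{Ω₁}(γ^I(1)) = conj(F^{f,1}_{Ω₁}(γ)) + I·conj(F^{f,2}_{Ω₁}(γ)); in other words, the componentwise conjugate F^{f,c}_{Ω₁} := (conj(F^{f,1}_{Ω₁}), conj(F^{f,2}_{Ω₁})) is a path-slice stem function of f^c_{Ω₁}, and in particular f^c_{Ω₁} is path-slice. -/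

import Mathlib

open scoped Quaternion
open Classical

attribute [local instance] Classical.propDecidable

noncomputable section

/-- Continuous-path carrier type: maps from `[0,1]` to `ℂⁿ`. -/
abbrev PathC (n : ℕ) := unitInterval → (Fin n → ℂ)

/-- The sphere of quaternionic imaginary units `𝕊 = {I : I² = -1}`. -/
def SQ : Set ℍ[ℝ] := {I | I ^ 2 = -1}

/-- A quaternion is real if it is the image of a real number. -/
def IsRealQ (p : ℍ[ℝ]) : Prop := ∃ r : ℝ, p = (r : ℍ[ℝ])

/-- `Ψ_i^I : ℂⁿ → ℂ_Iⁿ`, componentwise `x + y i ↦ x + y I`. -/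
def psi {n : ℕ} (I : ℍ[ℝ]) (z : Fin n → ℂ) : Fin n → ℍ[ℝ] :=
  fun k => ((z k).re : ℍ[ℝ]) + (z k).im • I

/-- The slice `ℂ_I = {x + y I}` as a subset of the quaternions. -/
def CI (I : ℍ[ℝ]) : Set ℍ[ℝ] := {p | ∃ x y : ℝ, p = (x : ℍ[ℝ]) + y • I}

/-- The weakly slice cone `ℍ_sⁿ = ⋃_{I ∈ 𝕊} ℂ_Iⁿ`. -/
def HSliceCone (n : ℕ) : Set (Fin n → ℍ[ℝ]) := ⋃ I ∈ SQ, Set.range (psi (n := n) I)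

/-- Membership in `𝒫(ℂⁿ)`: continuous with real initial point. -/
def IsPathP {n : ℕ} (γ : PathC n) : Prop :=
  Continuous γ ∧ ∀ k, ((γ 0) k).im = 0

/-- `γ^I ⊂ Ω`. -/
def pathInSlice {n : ℕ} (Ω : Set (Fin n → ℍ[ℝ])) (I : ℍ[ℝ]) (γ : PathC n) : Prop :=
  ∀ t, psi I (γ t) ∈ Ω

/-- `𝕊(Ω, γ) = {I ∈ 𝕊 : γ^I ⊂ Ω}`. -/
def SGamma {n : ℕ} (Ω : Set (Fin n → ℍ[ℝ])) (γ : PathC n) : Set ℍ[ℝ] :=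
  {I | I ∈ SQ ∧ pathInSlice Ω I γ}

/-- `γ ∈ 𝒫(ℂⁿ, Ω)`. -/
def PathIn {n : ℕ} (Ω : Set (Fin n → ℍ[ℝ])) (γ : PathC n) : Prop :=
  IsPathP γ ∧ ∃ I, I ∈ SGamma Ω γ

/-- `F` is a path-slice stem function of `f` on `Ω`. -/
def IsStem {n : ℕ} (Ω : Set (Fin n → ℍ[ℝ])) (f : (Fin n → ℍ[ℝ]) → ℍ[ℝ])
    (F : PathC n → ℍ[ℝ] × ℍ[ℝ]) : Prop :=
  ∀ γ, PathIn Ω γ → ∀ I ∈ SGamma Ω γ, f (psi I (γ 1)) = (F γ).1 + I * (F γ).2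

/-- `f` is a path-slice function on `Ω`. -/
def PathSlice {n : ℕ} (Ω : Set (Fin n → ℍ[ℝ])) (f : (Fin n → ℍ[ℝ]) → ℍ[ℝ]) : Prop :=
  ∃ F, IsStem Ω f F

/-- `Ω` is real-path-connected. -/
def RealPathConnected {n : ℕ} (Ω : Set (Fin n → ℍ[ℝ])) : Prop :=
  ∀ q ∈ Ω, ∃ γ : PathC n, PathIn Ω γ ∧ ∃ I ∈ SGamma Ω γ, psi I (γ 1) = q

/-- `Ω₂` is `Ω₁`-stem-preserving. -/
def StemPreserving {n : ℕ} (Ω₁ Ω₂ : Set (Fin n → ℍ[ℝ])) : Prop :=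
  (∀ γ : PathC n, PathIn Ω₁ γ → (SGamma Ω₂ γ).Nontrivial) ∧
  (∀ α β : PathC n, PathIn Ω₁ α → PathIn Ω₁ β → α 1 = β 1 →
    ¬ ∃ I, SGamma Ω₂ α ∩ SGamma Ω₂ β = {I})

/-- `Ω` is self-stem-preserving. -/
def SelfStemPreserving {n : ℕ} (Ω : Set (Fin n → ℍ[ℝ])) : Prop :=
  RealPathConnected Ω ∧ StemPreserving Ω Ω

/-- The map `𝕴 : ℍ_sⁿ → 𝕊 ∪ {0}`. -/
def frakI {n : ℕ} (q : Fin n → ℍ[ℝ]) : ℍ[ℝ] :=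
  if h : ∀ k, IsRealQ (q k) then 0
  else
    let k := (Finset.univ.filter fun k => ¬ IsRealQ (q k)).min' (by
      push_neg at h
      obtain ⟨k, hk⟩ := h
      exact ⟨k, Finset.mem_filter.mpr ⟨Finset.mem_univ k, hk⟩⟩)
    ‖q k - ((q k).re : ℍ[ℝ])‖⁻¹ • (q k - ((q k).re : ℍ[ℝ]))

/-- A choice of path-slice stem function of `f` (on paths in `Ω`); by
the results of Dou–Jin–Ren–Yang its restriction to `𝒫(ℂⁿ, Ω₁)` is the canonical `F^f_{Ω₁}`. -/
def stemOf {n : ℕ} (Ω : Set (Fin n → ℍ[ℝ])) (f : (Fin n → ℍ[ℝ]) → ℍ[ℝ]) :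
    PathC n → ℍ[ℝ] × ℍ[ℝ] :=
  Classical.epsilon (IsStem Ω f)

/-- The function `ℱ^f_{Ω₁} : Ω₁ → ℍ²` induced by the stem of `f` (path-slice on `Ω₂`). -/
def scrF {n : ℕ} (Ω₁ Ω₂ : Set (Fin n → ℍ[ℝ])) (f : (Fin n → ℍ[ℝ]) → ℍ[ℝ])
    (q : Fin n → ℍ[ℝ]) : ℍ[ℝ] × ℍ[ℝ] :=
  if ∀ k, IsRealQ (q k) then (f q, 0)
  else stemOf Ω₂ f (Classical.epsilon (fun γ : PathC n =>
    PathIn Ω₁ γ ∧ pathInSlice Ω₁ (frakI q) γ ∧ psi (frakI q) (γ 1) = q))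

/-- The `Ω₁`-slice conjugation `f^c_{Ω₁}`. -/
def sliceConj {n : ℕ} (Ω₁ Ω₂ : Set (Fin n → ℍ[ℝ])) (f : (Fin n → ℍ[ℝ]) → ℍ[ℝ]) :
    (Fin n → ℍ[ℝ]) → ℍ[ℝ] :=
  fun q => star (scrF Ω₁ Ω₂ f q).1 + frakI q * star (scrF Ω₁ Ω₂ f q).2

/-- The `*`-product `g * f` of a path-slice `g : Ω₁ → ℍ` with `f : Ω₂ → ℍ`. -/
def starProdF {n : ℕ} (Ω₁ Ω₂ : Set (Fin n → ℍ[ℝ])) (g f : (Fin n → ℍ[ℝ]) → ℍ[ℝ]) :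
    (Fin n → ℍ[ℝ]) → ℍ[ℝ] :=
  fun q => g q * (scrF Ω₁ Ω₂ f q).1 + frakI q * g q * (scrF Ω₁ Ω₂ f q).2

/-- The symmetrization `f^s_{Ω₁} = f^c_{Ω₁} * f`. -/
def symmF {n : ℕ} (Ω₁ Ω₂ : Set (Fin n → ℍ[ℝ])) (f : (Fin n → ℍ[ℝ]) → ℍ[ℝ]) :
    (Fin n → ℍ[ℝ]) → ℍ[ℝ] :=
  starProdF Ω₁ Ω₂ (sliceConj Ω₁ Ω₂ f) f

/-- The pointwise `*`-product on `ℍ²`. -/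
def starPair (p q : ℍ[ℝ] × ℍ[ℝ]) : ℍ[ℝ] × ℍ[ℝ] :=
  (p.1 * q.1 - p.2 * q.2, p.2 * q.1 + p.1 * q.2)

/-- Slice-open sets: every slice is open (pulled back to `ℂⁿ` via `Ψ_i^I`). -/
def SliceOpen {n : ℕ} (U : Set (Fin n → ℍ[ℝ])) : Prop :=
  ∀ I ∈ SQ, IsOpen {z : Fin n → ℂ | psi I z ∈ U}

/-- Weakly slice regular functions: each slice restriction is left `I`-holomorphic. -/
def SliceRegular {n : ℕ} (Ω : Set (Fin n → ℍ[ℝ])) (f : (Fin n → ℍ[ℝ]) → ℍ[ℝ]) : Prop :=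
  ∀ I ∈ SQ, ∀ z : Fin n → ℂ, psi I z ∈ Ω →
    DifferentiableWithinAt ℝ (fun w => f (psi I w)) {w | psi I w ∈ Ω} z ∧
    ∀ ℓ : Fin n,
      fderivWithin ℝ (fun w => f (psi I w)) {w | psi I w ∈ Ω} z (Pi.single ℓ 1)
        + I * fderivWithin ℝ (fun w => f (psi I w)) {w | psi I w ∈ Ω} z (Pi.single ℓ Complex.I)
        = 0

/-- The ball `B_I(q, r)` inside the slice `ℂ_Iⁿ`. -/
def BI {n : ℕ} (I : ℍ[ℝ]) (q : Fin n → ℍ[ℝ]) (r : ℝ) : Set (Fin n → ℍ[ℝ]) :=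
  {p | p ∈ Set.range (psi (n := n) I) ∧ dist p q < r}

/-- The slice topology. -/
def sliceTop (n : ℕ) : TopologicalSpace (Fin n → ℍ[ℝ]) where
  IsOpen := SliceOpen
  isOpen_univ := by intro I _; simpa using isOpen_univ
  isOpen_inter := by
    intro s t hs ht I hI
    have h : {z : Fin n → ℂ | psi I z ∈ s ∩ t}
        = {z : Fin n → ℂ | psi I z ∈ s} ∩ {z : Fin n → ℂ | psi I z ∈ t} := by
      ext z; simp [Set.mem_inter_iff]
    rw [h]
    exact (hs I hI).inter (ht I hI)
  isOpen_sUnion := by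
    intro S hS I hI
    have h : {z : Fin n → ℂ | psi I z ∈ ⋃₀ S} = ⋃ s ∈ S, {z : Fin n → ℂ | psi I z ∈ s} := by
      ext z; simp
    rw [h]
    exact isOpen_biUnion fun s hs => hS s hs I hI

/-- Slice-domains: nonempty slice-open sets connected in the slice topology. -/
def SliceDomain {n : ℕ} (Ω : Set (Fin n → ℍ[ℝ])) : Prop :=
  SliceOpen Ω ∧ @IsConnected _ (sliceTop n) Ω

/-- Concatenation `γ · ℒ_{γ(1)}^z` of a path with the segment from `γ(1)` to `z`. -/
def concatSeg {n : ℕ} (γ : PathC n) (z : Fin n → ℂ) : PathC n := fun t =>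
  if h : (t : ℝ) ≤ 1 / 2 then
    γ ⟨2 * (t : ℝ), ⟨by linarith [t.2.1], by linarith⟩⟩
  else
    (1 - (2 * (t : ℝ) - 1)) • γ 1 + (2 * (t : ℝ) - 1) • z

/-- The action of `σ` on `ℍ²`: `σ(p₁, p₂) = (-p₂, p₁)`. -/
def sigmaAct (p : ℍ[ℝ] × ℍ[ℝ]) : ℍ[ℝ] × ℍ[ℝ] := (-p.2, p.1)

/-- `F : 𝒫(ℂⁿ, Ω) → ℍ²` is holomorphic at the path `γ`. -/
def StemHoloAt {n : ℕ} (Ω : Set (Fin n → ℍ[ℝ])) (F : PathC n → ℍ[ℝ] × ℍ[ℝ])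
    (γ : PathC n) : Prop :=
  ∃ r > 0, (∀ z ∈ Metric.ball (γ 1) r, PathIn Ω (concatSeg γ z)) ∧
    ∀ z ∈ Metric.ball (γ 1) r,
      DifferentiableAt ℝ (fun w => F (concatSeg γ w)) z ∧
      ∀ ℓ : Fin n,
        fderiv ℝ (fun w => F (concatSeg γ w)) z (Pi.single ℓ 1)
          + sigmaAct (fderiv ℝ (fun w => F (concatSeg γ w)) z (Pi.single ℓ Complex.I)) = 0

/-- `F` is holomorphic (at every path of `𝒫(ℂⁿ, Ω)`). -/
def StemHolo {n : ℕ} (Ω : Set (Fin n → ℍ[ℝ])) (F : PathC n → ℍ[ℝ] × ℍ[ℝ]) : Prop :=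
  ∀ γ, PathIn Ω γ → StemHoloAt Ω F γ

/-- `E` is a complex-analytic subset of the open set `U ⊂ ℂⁿ`. -/
def IsComplexAnalyticSubset {n : ℕ} (U E : Set (Fin n → ℂ)) : Prop :=
  E ⊆ U ∧ ∀ z ∈ U, ∃ V, V ⊆ U ∧ IsOpen V ∧ z ∈ V ∧
    ∃ (m : ℕ) (h : Fin m → (Fin n → ℂ) → ℂ),
      (∀ j, DifferentiableOn ℂ (h j) V) ∧ E ∩ V = {w | w ∈ V ∧ ∀ j, h j w = 0}

/-- `A` is a path-slice analytic subset of the slice-domain `Ω`. -/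
def PathSliceAnalytic {n : ℕ} (Ω A : Set (Fin n → ℍ[ℝ])) : Prop :=
  A = Ω ∨ ∀ γ : PathC n, PathIn Ω γ →
    ∃ r > 0, ∃ rI : ℍ[ℝ] → ℝ, (∀ I ∈ SGamma Ω γ, rI I ∈ Set.Ioc (0 : ℝ) r) ∧
      ∃ E : Set (Fin n → ℂ), IsComplexAnalyticSubset (Metric.ball (γ 1) r) E ∧
        E ≠ Metric.ball (γ 1) r ∧
        ∀ I ∈ SGamma Ω γ, A ∩ BI I (psi I (γ 1)) (rI I) ⊆ psi I '' E

/-!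
On every slice `ℂ_Iⁿ` a weakly slice regular `f` satisfies `∂f/∂y_ℓ = I ∂f/∂x_ℓ`. Given three
units `I ≠ J` and `K` whose slices contain the path `γ`, the difference between `f` on `ℂ_Kⁿ` and
the slice-affine interpolation `a + K b` of its values on `ℂ_Iⁿ` and `ℂ_Jⁿ` satisfies
`∂/∂y_ℓ = K ∂/∂x_ℓ` and vanishes at real points. By the one-variable identity theorem (applied one
coordinate at a time) it vanishes near real points, and this propagates along `γ`; hence `f` is
path-slice, and the stem value at `γ` is determined by any two units of `𝕊(Ω₂, γ)`.

Consequently stems are path independent on `𝒫(ℂⁿ, Ω₁)` (join two paths in a common slice with the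
same endpoint), equal `(f (γ 1), 0)` at real endpoints, and satisfy `F(γ̄) = (F₁(γ), -F₂(γ))` for
the conjugate path. As `𝕴(γ^I(1)) = ±I`, the path used to define `f^c_{Ω₁}` at `γ^I(1)` can be
replaced by `γ` or `γ̄`, and in both cases `f^c_{Ω₁}(γ^I(1)) = conj F₁(γ) + I conj F₂(γ)`.
-/

open Metric Set Filter Function
open scoped Topology

section ImaginaryUnits

variable {I : ℍ[ℝ]}

lemma mul_self_of_mem_SQ (hI : I ∈ SQ) : I * I = -1 := (sq I).symm.trans hI

lemma neg_mem_SQ (hI : I ∈ SQ) : -I ∈ SQ := (neg_sq I).trans hI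

lemma norm_of_mem_SQ (hI : I ∈ SQ) : ‖I‖ = 1 := by
  have h : ‖I‖ ^ 2 = 1 := by rw [← norm_pow, hI, norm_neg, norm_one]
  exact (pow_eq_one_iff_of_nonneg (norm_nonneg I) two_ne_zero).1 h

lemma ne_zero_of_mem_SQ (hI : I ∈ SQ) : I ≠ 0 := by
  rintro rfl
  simpa using norm_of_mem_SQ hI

lemma re_eq_zero_of_mem_SQ (hI : I ∈ SQ) : I.re = 0 := by
  rw [← Quaternion.sq_eq_neg_normSq, hI, Quaternion.normSq_eq_norm_mul_self, norm_of_mem_SQ hI,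
    mul_one, Quaternion.coe_one]

lemma coe_add_smul_inj (hI : I ∈ SQ) {x y x' y' : ℝ} :
    (x : ℍ[ℝ]) + y • I = (x' : ℍ[ℝ]) + y' • I ↔ x = x' ∧ y = y' := by
  refine ⟨fun h => ?_, by rintro ⟨rfl, rfl⟩; rfl⟩
  have hx : x = x' := by
    simpa [re_eq_zero_of_mem_SQ hI] using congrArg (·.re) h
  subst hx
  refine ⟨rfl, ?_⟩
  have h' : (y - y') • I = 0 := by rw [sub_smul, sub_eq_zero]; exact add_left_cancel h
  exact sub_eq_zero.1 ((smul_eq_zero.1 h').resolve_right (ne_zero_of_mem_SQ hI))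

end ImaginaryUnits

lemma eq_of_add_mul_eq_of_ne {R : Type*} [Ring R] [NoZeroDivisors R] {J J' : R} (hJJ' : J ≠ J')
    {p q : R × R} (h : p.1 + J * p.2 = q.1 + J * q.2) (h' : p.1 + J' * p.2 = q.1 + J' * q.2) :
    p = q := by
  have hsnd : (J - J') * (p.2 - q.2) = 0 := by
    have e : ∀ {K : R}, p.1 + K * p.2 = q.1 + K * q.2 → K * p.2 - K * q.2 = q.1 - p.1 :=
      fun hK => by rw [sub_eq_sub_iff_add_eq_add, add_comm, hK]
    rw [sub_mul, mul_sub, mul_sub, e h, e h', sub_self]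
  have h2 : p.2 = q.2 := sub_eq_zero.1 ((mul_eq_zero.1 hsnd).resolve_left (sub_ne_zero.2 hJJ'))
  rw [h2] at h
  exact Prod.ext (add_right_cancel h) h2

section Psi

variable {n : ℕ} {I : ℍ[ℝ]}

lemma psi_injective (hI : I ∈ SQ) : Function.Injective (psi (n := n) I) := fun _ _ h =>
  funext fun k => Complex.ext_iff.2 ((coe_add_smul_inj hI).1 (congrFun h k))

lemma psi_eq_of_forall_im_eq_zero (J : ℍ[ℝ]) {z : Fin n → ℂ} (hz : ∀ k, (z k).im = 0) :
    psi I z = psi J z := by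
  funext k
  simp [psi, hz k]

lemma isRealQ_psi_iff (hI : I ∈ SQ) (z : Fin n → ℂ) (k : Fin n) :
    IsRealQ (psi I z k) ↔ (z k).im = 0 := by
  refine ⟨fun ⟨r, hr⟩ => ?_, fun h => ⟨(z k).re, by simp [psi, h]⟩⟩
  have h0 : ((r : ℝ) : ℍ[ℝ]) = (r : ℍ[ℝ]) + (0 : ℝ) • I := by simp
  rw [h0] at hr
  exact ((coe_add_smul_inj hI).1 hr).2

lemma psi_neg_conj (z : Fin n → ℂ) : psi (-I) (fun k => (starRingEnd ℂ) (z k)) = psi I z := by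
  funext k
  simp [psi, smul_neg]

lemma frakI_psi_eq_or_eq_neg (hI : I ∈ SQ) {z : Fin n → ℂ} (hz : ¬ ∀ k, IsRealQ (psi I z k)) :
    frakI (psi I z) = I ∨ frakI (psi I z) = -I := by
  rw [frakI, dif_neg hz]
  dsimp only
  generalize_proofs hne
  set k := (Finset.univ.filter fun k => ¬ IsRealQ (psi I z k)).min' hne
  have him : (z k).im ≠ 0 :=
    mt (isRealQ_psi_iff hI z k).2 (Finset.mem_filter.1 (Finset.min'_mem _ hne)).2
  have hsub : psi I z k - ((psi I z k).re : ℍ[ℝ]) = (z k).im • I := by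
    simp [psi, re_eq_zero_of_mem_SQ hI]
  rw [hsub, norm_smul, norm_of_mem_SQ hI, mul_one, smul_smul, Real.norm_eq_abs]
  rcases him.lt_or_gt with hneg | hpos
  · right
    rw [abs_of_neg hneg, inv_neg, neg_mul, inv_mul_cancel₀ hneg.ne, neg_smul, one_smul]
  · left
    rw [abs_of_pos hpos, inv_mul_cancel₀ hpos.ne', one_smul]

end Psi

lemma frequently_im_eq_zero {a : ℂ} (ha : a.im = 0) : ∃ᶠ u in 𝓝[≠] a, u.im = 0 := by
  have hmap : Tendsto ((↑) : ℝ → ℂ) (𝓝[≠] a.re) (𝓝[≠] a) := by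
    have hre : ((a.re : ℝ) : ℂ) = a := Complex.ext rfl (by simp [ha])
    refine tendsto_nhdsWithin_of_tendsto_nhds_of_eventually_within _ ?_ ?_
    · exact hre ▸ (Complex.continuous_ofReal.tendsto a.re).mono_left nhdsWithin_le_nhds
    · exact eventually_nhdsWithin_of_forall fun t ht hta =>
        ht (by simpa using congrArg Complex.re (mem_singleton_iff.1 hta))
  exact hmap.frequently (Frequently.of_forall fun t => Complex.ofReal_im t)

section LeftHolomorphic

variable {n : ℕ} {K : ℍ[ℝ]}

lemma norm_lift_apply (hK : K ∈ SQ) (z : ℂ) :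
    ‖Complex.lift ⟨K, mul_self_of_mem_SQ hK⟩ z‖ = ‖z‖ := by
  have hnormSq : Quaternion.normSq ((z.re : ℍ[ℝ]) + z.im • K) = Complex.normSq z := by
    have hK1 : Quaternion.normSq K = 1 := by
      rw [Quaternion.normSq_eq_norm_mul_self, norm_of_mem_SQ hK, mul_one]
    rw [Quaternion.normSq_def', re_eq_zero_of_mem_SQ hK] at hK1
    simp only [Quaternion.normSq_def', Quaternion.re_add, Quaternion.imI_add, Quaternion.imJ_add,
      Quaternion.imK_add, Quaternion.re_coe, Quaternion.imI_coe, Quaternion.imJ_coe,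
      Quaternion.imK_coe, Quaternion.re_smul, Quaternion.imI_smul, Quaternion.imJ_smul,
      Quaternion.imK_smul, smul_eq_mul, re_eq_zero_of_mem_SQ hK, Complex.normSq_apply]
    linear_combination z.im ^ 2 * hK1
  have h := congrArg Real.sqrt hnormSq
  rwa [Quaternion.normSq_eq_norm_mul_self, Real.sqrt_mul_self (norm_nonneg _),
    Complex.normSq_eq_norm_sq, Real.sqrt_sq (norm_nonneg _)] at h

/-- Left multiplication through `x + y i ↦ x + y K` makes `ℍ` a normed `ℂ`-space in which `φ` is
holomorphic. -/
lemma eqOn_zero_of_fderiv_I_eq_mul (hK : K ∈ SQ) {φ : ℂ → ℍ[ℝ]} {U : Set ℂ} (hU : IsOpen U)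
    (hUc : IsPreconnected U)
    (hφ : ∀ u ∈ U, DifferentiableAt ℝ φ u ∧ fderiv ℝ φ u Complex.I = K * fderiv ℝ φ u 1)
    {a : ℂ} (ha : a ∈ U) (hfreq : ∃ᶠ u in 𝓝[≠] a, φ u = 0) : EqOn φ 0 U := by
  let ι := Complex.lift ⟨K, mul_self_of_mem_SQ hK⟩
  let _ : Module ℂ ℍ[ℝ] := Module.compHom ℍ[ℝ] ι.toRingHom
  let _ : NormedSpace ℂ ℍ[ℝ] :=
    { norm_smul_le := fun z q => by
        rw [show z • q = ι z * q from rfl, norm_mul, norm_lift_apply hK] }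
  have hdiff : DifferentiableOn ℂ φ U := by
    intro u hu
    obtain ⟨hd, hCR⟩ := hφ u hu
    set L := fderiv ℝ φ u
    let L' : ℂ →L[ℂ] ℍ[ℝ] := (ContinuousLinearMap.id ℂ ℂ).smulRight (L 1)
    have hL' : ∀ v : ℂ, L' v = L v := fun v => by
      have hv : v = v.re • (1 : ℂ) + v.im • Complex.I := by simp
      show ((v.re : ℍ[ℝ]) + v.im • K) * L 1 = L v
      conv_rhs => rw [hv, map_add, map_smul, map_smul, hCR]
      rw [add_mul, Quaternion.coe_mul_eq_smul, smul_mul_assoc]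
    have hC : HasFDerivAt φ L' u := by
      rw [hasFDerivAt_iff_isLittleO_nhds_zero]
      simpa only [hL'] using hasFDerivAt_iff_isLittleO_nhds_zero.1 hd.hasFDerivAt
    exact hC.differentiableAt.differentiableWithinAt
  exact (hdiff.analyticOnNhd hU).eqOn_zero_of_preconnected_of_frequently_eq_zero hUc ha hfreq

/-- Left `K`-holomorphy `(∂/∂x_ℓ + K ∂/∂y_ℓ) h = 0`, in the equivalent form
`∂h/∂y_ℓ = K ∂h/∂x_ℓ`. -/
def LeftHolomorphicOn (K : ℍ[ℝ]) (h : (Fin n → ℂ) → ℍ[ℝ]) (W : Set (Fin n → ℂ)) : Prop :=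
  ∀ z ∈ W, DifferentiableAt ℝ h z ∧
    ∀ ℓ, fderiv ℝ h z (Pi.single ℓ Complex.I) = K * fderiv ℝ h z (Pi.single ℓ 1)

variable {h : (Fin n → ℂ) → ℍ[ℝ]} {W : Set (Fin n → ℂ)}

lemma LeftHolomorphicOn.mono {W' : Set (Fin n → ℂ)} (hh : LeftHolomorphicOn K h W)
    (hW' : W' ⊆ W) : LeftHolomorphicOn K h W' := fun z hz => hh z (hW' hz)

lemma LeftHolomorphicOn.eqOn_update
    (hK : K ∈ SQ) (hh : LeftHolomorphicOn K h W) {z : Fin n → ℂ} {ℓ : Fin n} {U : Set ℂ}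
    (hU : IsOpen U) (hUc : IsPreconnected U) (hUW : ∀ u ∈ U, update z ℓ u ∈ W) {a : ℂ}
    (ha : a ∈ U) (hfreq : ∃ᶠ u in 𝓝[≠] a, h (update z ℓ u) = 0) :
    ∀ u ∈ U, h (update z ℓ u) = 0 := by
  refine fun u hu => eqOn_zero_of_fderiv_I_eq_mul hK hU hUc (fun u hu => ?_) ha hfreq hu
  obtain ⟨hd, hCR⟩ := hh _ (hUW u hu)
  have hcomp : HasFDerivAt (fun u => h (update z ℓ u)) _ u :=
    hd.hasFDerivAt.comp u (hasFDerivAt_update (𝕜 := ℝ) z u)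
  have hsingle : ∀ v : ℂ, (ContinuousLinearMap.pi (Pi.single ℓ (ContinuousLinearMap.id ℝ ℂ)) :
      ℂ →L[ℝ] (Fin n → ℂ)) v = Pi.single ℓ v := fun v => by
    ext k
    by_cases hk : k = ℓ
    · subst hk; simp
    · simp [hk]
  refine ⟨hcomp.differentiableAt, ?_⟩
  simp only [hcomp.fderiv, ContinuousLinearMap.coe_comp, comp_apply, hsingle]
  exact hCR ℓ

/-- The vanishing spreads from `∏ D k` to `∏ U k` one coordinate at a time. -/
lemma LeftHolomorphicOn.eqOn_pi (hK : K ∈ SQ) {U : Fin n → Set ℂ}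
    (hU : ∀ k, IsOpen (U k)) (hUc : ∀ k, IsPreconnected (U k))
    (hh : LeftHolomorphicOn K h (univ.pi U)) {D : Fin n → Set ℂ}
    (hacc : ∀ k, ∃ a ∈ U k, ∃ᶠ u in 𝓝[≠] a, u ∈ D k)
    (hseed : ∀ z ∈ univ.pi U, (∀ k, z k ∈ D k) → h z = 0) : EqOn h 0 (univ.pi U) := by
  suffices key : ∀ A : Finset (Fin n), ∀ z ∈ univ.pi U, (∀ k ∉ A, z k ∈ D k) → h z = 0 from
    fun z hz => key Finset.univ z hz (by simp)
  intro A
  induction A using Finset.induction_on with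
  | empty => exact fun z hz hD => hseed z hz fun k => hD k (Finset.notMem_empty k)
  | insert ℓ A _ ih =>
    intro z hz hD
    have hline : ∀ u ∈ U ℓ, update z ℓ u ∈ univ.pi U := fun u hu =>
      (update_mem_pi_iff_of_mem hz).2 fun _ => hu
    obtain ⟨a, ha, hfreq⟩ := hacc ℓ
    have hzero := hh.eqOn_update hK (hU ℓ) (hUc ℓ) hline ha <| by
      refine (hfreq.and_eventually (eventually_nhdsWithin_of_eventually_nhds
        ((hU ℓ).mem_nhds ha))).mono fun u ⟨huD, huU⟩ => ih _ (hline u huU) fun k hk => ?_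
      by_cases hkℓ : k = ℓ
      · subst hkℓ; simpa using huD
      · simpa [hkℓ] using hD k (by simp [hkℓ, hk])
    simpa using hzero (z ℓ) (hz ℓ (mem_univ ℓ))

lemma LeftHolomorphicOn.eventuallyEq_zero_of_forall_im_eq_zero (hK : K ∈ SQ) (hW : IsOpen W)
    (hh : LeftHolomorphicOn K h W) (hreal : ∀ z ∈ W, (∀ k, (z k).im = 0) → h z = 0)
    {z : Fin n → ℂ} (hz : z ∈ W) (hzr : ∀ k, (z k).im = 0) : h =ᶠ[𝓝 z] 0 := by
  obtain ⟨r, hr, hball⟩ := Metric.isOpen_iff.1 hW z hz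
  refine eventually_of_mem (ball_mem_nhds z hr) ?_
  rw [ball_pi z hr] at hball ⊢
  refine (hh.mono hball).eqOn_pi hK (fun _ => isOpen_ball)
    (fun _ => (convex_ball _ _).isPreconnected) (D := fun _ => {u | u.im = 0})
    (fun k => ⟨z k, mem_ball_self hr, frequently_im_eq_zero (hzr k)⟩)
    fun w hw hwr => hreal w (hball hw) hwr

lemma LeftHolomorphicOn.eventuallyEq_zero_of_mem_closure (hK : K ∈ SQ) (hW : IsOpen W)
    (hh : LeftHolomorphicOn K h W) {z : Fin n → ℂ} (hz : z ∈ W)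
    (hcl : z ∈ closure {w | h =ᶠ[𝓝 w] 0}) : h =ᶠ[𝓝 z] 0 := by
  obtain ⟨r, hr, hball⟩ := Metric.isOpen_iff.1 hW z hz
  obtain ⟨w, hwz, hw⟩ := mem_closure_iff_nhds.1 hcl _ (ball_mem_nhds z hr)
  obtain ⟨δ, hδ, hδw⟩ := Metric.eventually_nhds_iff_ball.1 hw
  refine eventually_of_mem (ball_mem_nhds z hr) ?_
  rw [ball_pi z hr] at hball hwz ⊢
  refine (hh.mono hball).eqOn_pi hK (fun _ => isOpen_ball)
    (fun _ => (convex_ball _ _).isPreconnected) (D := fun k => ball (w k) δ)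
    (fun k => ⟨w k, hwz k (mem_univ k),
      (eventually_nhdsWithin_of_eventually_nhds (ball_mem_nhds _ hδ)).frequently⟩)
    fun v _ hv => hδw v (by rw [ball_pi w hδ]; exact fun k _ => hv k)

/-- `h` vanishes near `γ t` for every `t`: the set of such `t` is clopen in `[0, 1]` and contains
the real initial point. -/
lemma LeftHolomorphicOn.eq_zero_of_isPathP (hK : K ∈ SQ) (hW : IsOpen W)
    (hh : LeftHolomorphicOn K h W) (hreal : ∀ z ∈ W, (∀ k, (z k).im = 0) → h z = 0)
    {γ : PathC n} (hγ : IsPathP γ) (hγW : ∀ t, γ t ∈ W) : h (γ 1) = 0 := by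
  set Z := {w | h =ᶠ[𝓝 w] 0}
  have hopen : IsOpen (γ ⁻¹' Z) := isOpen_setOfPred_eventually_nhds.preimage hγ.1
  have hclosed : IsClosed (γ ⁻¹' Z) := isClosed_of_closure_subset fun t ht =>
    hh.eventuallyEq_zero_of_mem_closure hK hW (hγW t) <|
      closure_mono (image_preimage_subset γ Z) (mem_closure_image hγ.1.continuousAt ht)
  have h0 : (0 : unitInterval) ∈ γ ⁻¹' Z :=
    hh.eventuallyEq_zero_of_forall_im_eq_zero hK hW hreal (hγW 0) hγ.2
  have huniv := IsClopen.eq_univ ⟨hclosed, hopen⟩ ⟨0, h0⟩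
  exact (huniv ▸ mem_univ (1 : unitInterval) : (1 : unitInterval) ∈ γ ⁻¹' Z).self_of_nhds

end LeftHolomorphic

/-- The value at `K` of the slice-affine function `L ↦ a + L b` taking the values `u` at `I`
and `v` at `J`. -/
def sliceEval (I J K u v : ℍ[ℝ]) : ℍ[ℝ] := u + (K - I) * (I - J)⁻¹ * (u - v)

section SliceEval

variable {I J K : ℍ[ℝ]}

lemma sliceEval_self (u : ℍ[ℝ]) : sliceEval I J K u u = u := by simp [sliceEval]

lemma sliceEval_eq_add_mul (u v : ℍ[ℝ]) : sliceEval I J K u v =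
    (u - I * ((I - J)⁻¹ * (u - v))) + K * ((I - J)⁻¹ * (u - v)) := by
  simp only [sliceEval, sub_mul, mul_assoc]
  abel

/-- Makes the interpolation compatible with the equations `∂_y = L ∂_x` on the three slices. -/
lemma sliceEval_mul_mul (hI : I ∈ SQ) (hJ : J ∈ SQ) (hK : K ∈ SQ) (hIJ : I ≠ J) (A B : ℍ[ℝ]) :
    sliceEval I J K (I * A) (J * B) = K * sliceEval I J K A B := by
  have hIJ' : I - J ≠ 0 := sub_ne_zero.2 hIJ
  have hII := mul_self_of_mem_SQ hI
  have hKK := mul_self_of_mem_SQ hK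
  have key : (I - J)⁻¹ * (I * A - J * B) = A - I * ((I - J)⁻¹ * (A - B)) := by
    refine mul_left_cancel₀ hIJ' ?_
    have hJJ := mul_self_of_mem_SQ hJ
    rw [← mul_assoc, mul_inv_cancel₀ hIJ', one_mul, mul_sub, ← mul_assoc (I - J) I,
      show (I - J) * I = -(J * (I - J)) by simp only [sub_mul, mul_sub, hII, hJJ]; abel,
      neg_mul, mul_assoc J, ← mul_assoc (I - J), mul_inv_cancel₀ hIJ', one_mul]
    noncomm_ring
  rw [sliceEval, sliceEval, mul_assoc _ _ (I * A - J * B), key]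
  simp only [mul_add, mul_sub, ← mul_assoc, hII, hKK, sub_mul]
  noncomm_ring

end SliceEval

section SliceRegular

variable {n : ℕ} {Ω : Set (Fin n → ℍ[ℝ])} {f : (Fin n → ℍ[ℝ]) → ℍ[ℝ]}

lemma SliceRegular.leftHolomorphicOn (hΩ : SliceOpen Ω) (hf : SliceRegular Ω f) {I : ℍ[ℝ]}
    (hI : I ∈ SQ) : LeftHolomorphicOn I (fun w => f (psi I w)) {w | psi I w ∈ Ω} := by
  intro z hz
  obtain ⟨hd, hCR⟩ := hf I hI z hz
  have hz' : {w | psi I w ∈ Ω} ∈ 𝓝 z := (hΩ I hI).mem_nhds hz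
  refine ⟨hd.differentiableAt hz', fun ℓ => ?_⟩
  have h := congrArg (I * ·) (hCR ℓ)
  simp only [fderivWithin_of_mem_nhds hz', mul_add, ← mul_assoc, mul_self_of_mem_SQ hI,
    neg_one_mul, mul_zero] at h
  exact (add_neg_eq_zero.1 h).symm

lemma SliceRegular.eq_sliceEval (hΩ : SliceOpen Ω) (hf : SliceRegular Ω f) {γ : PathC n}
    (hγ : IsPathP γ) {I J K : ℍ[ℝ]} (hI : I ∈ SGamma Ω γ) (hJ : J ∈ SGamma Ω γ)
    (hK : K ∈ SGamma Ω γ) (hIJ : I ≠ J) :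
    f (psi K (γ 1)) = sliceEval I J K (f (psi I (γ 1))) (f (psi J (γ 1))) := by
  set h : (Fin n → ℂ) → ℍ[ℝ] := fun z =>
    f (psi K z) - sliceEval I J K (f (psi I z)) (f (psi J z))
  set W := {w | psi I w ∈ Ω} ∩ {w | psi J w ∈ Ω} ∩ {w | psi K w ∈ Ω}
  have hW : IsOpen W := ((hΩ I hI.1).inter (hΩ J hJ.1)).inter (hΩ K hK.1)
  have hh : LeftHolomorphicOn K h W := by
    rintro z ⟨⟨hzI, hzJ⟩, hzK⟩
    obtain ⟨hdI, hCRI⟩ := hf.leftHolomorphicOn hΩ hI.1 z hzI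
    obtain ⟨hdJ, hCRJ⟩ := hf.leftHolomorphicOn hΩ hJ.1 z hzJ
    obtain ⟨hdK, hCRK⟩ := hf.leftHolomorphicOn hΩ hK.1 z hzK
    have hH : HasFDerivAt h _ z := hdK.hasFDerivAt.sub (hdI.hasFDerivAt.add
      ((hdI.hasFDerivAt.sub hdJ.hasFDerivAt).const_mul ((K - I) * (I - J)⁻¹)))
    have hDh : ∀ v, fderiv ℝ h z v = fderiv ℝ (fun w => f (psi K w)) z v -
        sliceEval I J K (fderiv ℝ (fun w => f (psi I w)) z v)
          (fderiv ℝ (fun w => f (psi J w)) z v) := fun v => by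
      rw [hH.fderiv]
      rfl
    refine ⟨hH.differentiableAt, fun ℓ => ?_⟩
    rw [hDh, hDh, hCRI, hCRJ, hCRK, sliceEval_mul_mul hI.1 hJ.1 hK.1 hIJ, mul_sub]
  have hreal : ∀ z ∈ W, (∀ k, (z k).im = 0) → h z = 0 := fun z _ hz => by
    simp only [h, psi_eq_of_forall_im_eq_zero I hz, sliceEval_self, sub_self]
  exact sub_eq_zero.1 (hh.eq_zero_of_isPathP hK.1 hW hreal hγ
    fun t => ⟨⟨hI.2 t, hJ.2 t⟩, hK.2 t⟩)

lemma SliceRegular.exists_forall_eq_add_mul (hΩ : SliceOpen Ω) (hf : SliceRegular Ω f)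
    {γ : PathC n} (hγ : IsPathP γ) :
    ∃ p : ℍ[ℝ] × ℍ[ℝ], ∀ L ∈ SGamma Ω γ, f (psi L (γ 1)) = p.1 + L * p.2 := by
  by_cases hnt : (SGamma Ω γ).Nontrivial
  · obtain ⟨I, hI, J, hJ, hIJ⟩ := hnt
    set u := f (psi I (γ 1))
    set b := (I - J)⁻¹ * (u - f (psi J (γ 1)))
    exact ⟨(u - I * b, b), fun L hL =>
      (hf.eq_sliceEval hΩ hγ hI hJ hL hIJ).trans (sliceEval_eq_add_mul _ _)⟩
  · rcases (not_nontrivial_iff.1 hnt).eq_empty_or_singleton with hempty | ⟨I, hI⟩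
    · exact ⟨0, by simp [hempty]⟩
    · exact ⟨(f (psi I (γ 1)), 0), by simp [hI]⟩

lemma SliceRegular.pathSlice (hΩ : SliceOpen Ω) (hf : SliceRegular Ω f) : PathSlice Ω f := by
  choose! F hF using fun γ (hγ : PathIn Ω γ) => hf.exists_forall_eq_add_mul hΩ hγ.1
  exact ⟨F, fun γ hγ => hF γ hγ⟩

lemma SliceRegular.isStem_stemOf (hΩ : SliceOpen Ω) (hf : SliceRegular Ω f) :
    IsStem Ω f (stemOf Ω f) :=
  Classical.epsilon_spec (hf.pathSlice hΩ)

end SliceRegular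

section Stems

variable {n : ℕ} {Ω Ω₁ Ω₂ : Set (Fin n → ℍ[ℝ])} {f : (Fin n → ℍ[ℝ]) → ℍ[ℝ]}
  {F : PathC n → ℍ[ℝ] × ℍ[ℝ]} {γ : PathC n}

lemma IsStem.apply_eq (hF : IsStem Ω f F) (hγ : IsPathP γ) {J J' : ℍ[ℝ]}
    (hJ : J ∈ SGamma Ω γ) (hJ' : J' ∈ SGamma Ω γ) (hJJ' : J ≠ J') {p : ℍ[ℝ] × ℍ[ℝ]}
    (h : f (psi J (γ 1)) = p.1 + J * p.2) (h' : f (psi J' (γ 1)) = p.1 + J' * p.2) :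
    F γ = p :=
  eq_of_add_mul_eq_of_ne hJJ' ((hF γ ⟨hγ, J, hJ⟩ J hJ).symm.trans h)
    ((hF γ ⟨hγ, J, hJ⟩ J' hJ').symm.trans h')

lemma IsStem.apply_eq_of_forall_im_eq_zero (hF : IsStem Ω f F) (hγ : IsPathP γ)
    (hnt : (SGamma Ω γ).Nontrivial) (hz : ∀ k, (γ 1 k).im = 0) (I : ℍ[ℝ]) :
    F γ = (f (psi I (γ 1)), 0) := by
  obtain ⟨J, hJ, J', hJ', hJJ'⟩ := hnt
  refine hF.apply_eq hγ hJ hJ' hJJ' ?_ ?_ <;>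
    rw [psi_eq_of_forall_im_eq_zero I hz, mul_zero, add_zero]

def conjPath (γ : PathC n) : PathC n := fun t k => starRingEnd ℂ (γ t k)

lemma psi_neg_conjPath (I : ℍ[ℝ]) (γ : PathC n) (t : unitInterval) :
    psi (-I) (conjPath γ t) = psi I (γ t) :=
  psi_neg_conj (γ t)

lemma IsPathP.conjPath (hγ : IsPathP γ) : IsPathP (conjPath γ) :=
  ⟨continuous_pi fun k => Complex.continuous_conj.comp ((continuous_apply k).comp hγ.1),
    fun k => by rw [_root_.conjPath, Complex.conj_im, hγ.2 k, neg_zero]⟩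

lemma neg_mem_SGamma_conjPath {I : ℍ[ℝ]} (hI : I ∈ SGamma Ω γ) :
    -I ∈ SGamma Ω (conjPath γ) :=
  ⟨neg_mem_SQ hI.1, fun t => (psi_neg_conjPath I γ t).symm ▸ hI.2 t⟩

lemma IsStem.apply_conjPath (hF : IsStem Ω f F) (hγ : IsPathP γ)
    (hnt : (SGamma Ω γ).Nontrivial) : F (conjPath γ) = ((F γ).1, -(F γ).2) := by
  obtain ⟨J, hJ, J', hJ', hJJ'⟩ := hnt
  refine hF.apply_eq hγ.conjPath (neg_mem_SGamma_conjPath hJ) (neg_mem_SGamma_conjPath hJ')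
    (neg_injective.ne hJJ') ?_ ?_ <;>
    rw [psi_neg_conjPath, neg_mul_neg] <;>
    exact hF γ ⟨hγ, J, hJ⟩ _ ‹_›

lemma exists_isPathP_pathInSlice_iff {α β : PathC n} (hα : IsPathP α) (hβ : Continuous β)
    (h1 : α 1 = β 1) : ∃ ρ : PathC n, IsPathP ρ ∧ ∀ Ω I,
      pathInSlice Ω I ρ ↔ pathInSlice Ω I α ∧ pathInSlice Ω I β := by
  let pα : Path (α 0) (α 1) := ⟨⟨α, hα.1⟩, rfl, rfl⟩
  let pβ : Path (β 0) (β 1) := ⟨⟨β, hβ⟩, rfl, rfl⟩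
  let ρ := pα.trans (pβ.symm.cast h1 rfl)
  refine ⟨ρ, ⟨ρ.continuous, by simpa [ρ] using hα.2⟩, fun Ω I => ?_⟩
  simp only [pathInSlice, ← mem_preimage (f := psi I), ← range_subset_iff, ρ, Path.trans_range,
    Path.cast_coe, Path.symm_range, union_subset_iff]
  rfl

lemma IsStem.apply_eq_of_apply_one_eq
    (hnt : ∀ γ, PathIn Ω₁ γ → (SGamma Ω₂ γ).Nontrivial) (hF : IsStem Ω₂ f F)
    {α β : PathC n} (hα : PathIn Ω₁ α) (hβ : PathIn Ω₁ β) (h1 : α 1 = β 1) {L : ℍ[ℝ]}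
    (hLα : L ∈ SGamma Ω₁ α) (hLβ : L ∈ SGamma Ω₁ β) : F α = F β := by
  obtain ⟨ρ, hρ, hρslice⟩ := exists_isPathP_pathInSlice_iff hα.1 hβ.1.1 h1
  obtain ⟨J, hJ, J', hJ', hJJ'⟩ :=
    hnt ρ ⟨hρ, L, hLα.1, (hρslice Ω₁ L).2 ⟨hLα.2, hLβ.2⟩⟩
  have hJαβ := (hρslice Ω₂ J).1 hJ.2
  have hJ'αβ := (hρslice Ω₂ J').1 hJ'.2
  refine hF.apply_eq hα.1 ⟨hJ.1, hJαβ.1⟩ ⟨hJ'.1, hJ'αβ.1⟩ hJJ' ?_ ?_ <;> rw [h1]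
  · exact hF β ⟨hβ.1, J, hJ.1, hJαβ.2⟩ J ⟨hJ.1, hJαβ.2⟩
  · exact hF β ⟨hβ.1, J, hJ.1, hJαβ.2⟩ J' ⟨hJ'.1, hJ'αβ.2⟩

lemma scrF_psi_of_frakI_eq (hnt : ∀ γ, PathIn Ω₁ γ → (SGamma Ω₂ γ).Nontrivial)
    (hF : IsStem Ω₂ f (stemOf Ω₂ f)) (hγ : PathIn Ω₁ γ) {I : ℍ[ℝ]} (hI : I ∈ SGamma Ω₁ γ)
    (hreal : ¬ ∀ k, IsRealQ (psi I (γ 1) k)) (hfrak : frakI (psi I (γ 1)) = I) :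
    scrF Ω₁ Ω₂ f (psi I (γ 1)) = stemOf Ω₂ f γ := by
  rw [scrF, if_neg hreal, hfrak]
  obtain ⟨hδ, hδI, hδ1⟩ := Classical.epsilon_spec (p := fun δ : PathC n =>
    PathIn Ω₁ δ ∧ pathInSlice Ω₁ I δ ∧ psi I (δ 1) = psi I (γ 1)) ⟨γ, hγ, hI.2, rfl⟩
  exact hF.apply_eq_of_apply_one_eq hnt hδ hγ (psi_injective hI.1 hδ1) ⟨hI.1, hδI⟩ hI

end Stems

theorem conjStem_isStem_general {n : ℕ} (Ω₁ Ω₂ : Set (Fin n → ℍ[ℝ]))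
    (ho2 : SliceOpen Ω₂)
    (hsp : StemPreserving Ω₁ Ω₂)
    (f : (Fin n → ℍ[ℝ]) → ℍ[ℝ]) (hf : SliceRegular Ω₂ f) :
    IsStem Ω₁ (sliceConj Ω₁ Ω₂ f)
        (fun γ => (star (stemOf Ω₂ f γ).1, star (stemOf Ω₂ f γ).2)) ∧
    PathSlice Ω₁ (sliceConj Ω₁ Ω₂ f) := by
  have hF := hf.isStem_stemOf ho2
  have hnt := hsp.1
  have hconj : IsStem Ω₁ (sliceConj Ω₁ Ω₂ f)
      (fun γ => (star (stemOf Ω₂ f γ).1, star (stemOf Ω₂ f γ).2)) := by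
    intro γ hγ I hI
    by_cases hreal : ∀ k, IsRealQ (psi I (γ 1) k)
    · have hz k : (γ 1 k).im = 0 := (isRealQ_psi_iff hI.1 _ k).1 (hreal k)
      simp [sliceConj, scrF, hreal, frakI,
        hF.apply_eq_of_forall_im_eq_zero hγ.1 (hnt γ hγ) hz I]
    rcases frakI_psi_eq_or_eq_neg hI.1 hreal with hfrak | hfrak
    · simp only [sliceConj, scrF_psi_of_frakI_eq hnt hF hγ hI hreal hfrak, hfrak]
    · have hc : PathIn Ω₁ (conjPath γ) := ⟨hγ.1.conjPath, -I, neg_mem_SGamma_conjPath hI⟩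
      rw [← psi_neg_conjPath I γ 1] at hreal hfrak ⊢
      simp only [sliceConj, scrF_psi_of_frakI_eq hnt hF hc (neg_mem_SGamma_conjPath hI) hreal
        hfrak, hfrak, hF.apply_conjPath hγ.1 (hnt γ hγ), star_neg, neg_mul_neg]
  exact ⟨hconj, _, hconj⟩

/-- the componentwise conjugate of the stem of `f` is a path-slice stem
function of `f^c_{Ω₁}`; in particular `f^c_{Ω₁}` is path-slice. -/
theorem conjStem_isStem {n : ℕ} (Ω₁ Ω₂ : Set (Fin n → ℍ[ℝ]))
    (h1 : Ω₁ ⊆ HSliceCone n) (h2 : Ω₂ ⊆ HSliceCone n)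
    (ho1 : SliceOpen Ω₁) (ho2 : SliceOpen Ω₂)
    (hrpc : RealPathConnected Ω₁) (hsp : StemPreserving Ω₁ Ω₂)
    (f : (Fin n → ℍ[ℝ]) → ℍ[ℝ]) (hf : SliceRegular Ω₂ f) :
    IsStem Ω₁ (sliceConj Ω₁ Ω₂ f)
        (fun γ => (star (stemOf Ω₂ f γ).1, star (stemOf Ω₂ f γ).2)) ∧
    PathSlice Ω₁ (sliceConj Ω₁ Ω₂ f) :=
  conjStem_isStem_general Ω₁ Ω₂ ho2 hsp f hf
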